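/- arXiv:2605.21422 — 4 statements merged into one kernel-verified Lean document; each statement's English description precedes it below -/
import Mathlib

section
/- Let E be a finite-dimensional real inner product space and θ₀ ∈ E. Let L : E → ℝ be differentiable on a neighborhood of θ₀ with gradient map ∇L differentiable at θ₀; denote by H the derivative of ∇L at θ₀ (the Hessian of L at θ₀) and assume H, viewed as a continuous linear map on E, is invertible. Let ℓ : E → ℝ be differentiable on a neighborhood of θ₀. Suppose θ : ℝ → E is differentiable at 0 with θ(0) = θ₀, the map ε ↦ ∇ℓ(θ(ε)) is continuous at 0, and the stationarity condition ∇L(θ(ε)) + ε · ∇ℓ(θ(ε)) = 0 holds for all ε in a neighborhood of 0. Then θ′(0) = −H⁻¹(∇ℓ(θ₀)). -/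
open RealInnerProductSpace Filter Topology

/-! Differentiating the stationarity condition `∇L(θ ε) = -(ε • ∇ℓ(θ ε))` at `ε = 0`: the left side
has derivative `H θ′(0)` by the chain rule, and the right side has derivative `-∇ℓ(θ₀)` because its
slope at `0` is `-∇ℓ(θ ε)`, which tends to `-∇ℓ(θ₀)` by continuity alone. -/

section

variable {𝕜 : Type*} [NontriviallyNormedField 𝕜]
  {E : Type*} [NormedAddCommGroup E] [NormedSpace 𝕜 E]
  {F : Type*} [NormedAddCommGroup F] [NormedSpace 𝕜 F]

theorem hasDerivAt_sub_smul_of_continuousAt {g : 𝕜 → F} {a : 𝕜} (hg : ContinuousAt g a) :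
    HasDerivAt (fun x => (x - a) • g x) (g a) a := by
  rw [hasDerivAt_iff_tendsto_slope]
  refine (hg.tendsto.mono_left nhdsWithin_le_nhds).congr' ?_
  filter_upwards [self_mem_nhdsWithin] with x hx
  have hx : x - a ≠ 0 := sub_ne_zero.mpr hx
  simp [slope, smul_smul, inv_mul_cancel₀ hx]

theorem deriv_eq_neg_symm_of_eventually_add_smul_eq_zero {G : E → F} {H : E ≃L[𝕜] F}
    {θ : 𝕜 → E} {g : 𝕜 → F} (hG : HasFDerivAt G (H : E →L[𝕜] F) (θ 0))
    (hθ : DifferentiableAt 𝕜 θ 0) (hg : ContinuousAt g 0)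
    (hstat : ∀ᶠ ε in 𝓝 0, G (θ ε) + ε • g ε = 0) :
    deriv θ 0 = -H.symm (g 0) := by
  have hGθ : HasDerivAt (fun ε => G (θ ε)) (H (deriv θ 0)) 0 :=
    hG.comp_hasDerivAt 0 hθ.hasDerivAt
  have hsmul : HasDerivAt (fun ε => -(ε • g ε)) (-g 0) 0 := by
    simpa only [sub_zero] using (hasDerivAt_sub_smul_of_continuousAt hg).fun_neg
  have hGθ_eq : (fun ε => G (θ ε)) =ᶠ[𝓝 0] fun ε => -(ε • g ε) := by
    filter_upwards [hstat] with ε hε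
    exact eq_neg_of_add_eq_zero_left hε
  have hH : H (deriv θ 0) = -g 0 := hGθ.unique (hsmul.congr_of_eventuallyEq hGθ_eq)
  simpa using congrArg H.symm hH

end

theorem stmt_6_general {E : Type*} [NormedAddCommGroup E] [InnerProductSpace ℝ E]
    [FiniteDimensional ℝ E] (θ₀ : E) (L ℓ : E → ℝ)
    (hL' : DifferentiableAt ℝ (gradient L) θ₀)
    (H : E ≃L[ℝ] E) (hH : (H : E →L[ℝ] E) = fderiv ℝ (gradient L) θ₀)
    (θ : ℝ → E) (hθ : DifferentiableAt ℝ θ 0) (hθ0 : θ 0 = θ₀)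
    (hcont : ContinuousAt (fun ε : ℝ => gradient ℓ (θ ε)) 0)
    (hstat : ∀ᶠ ε in nhds (0 : ℝ), gradient L (θ ε) + ε • gradient ℓ (θ ε) = 0) :
    deriv θ 0 = -(H.symm (gradient ℓ θ₀)) := by
  have hHess : HasFDerivAt (gradient L) (H : E →L[ℝ] E) (θ 0) := by
    rw [hH, hθ0]
    exact hL'.hasFDerivAt
  simpa [hθ0] using deriv_eq_neg_symm_of_eventually_add_smul_eq_zero hHess hθ hcont hstat

/-- Influence-function derivative of the upweighted optimum.
`L` is differentiable near `θ₀`, its gradient map is differentiable at `θ₀`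
with invertible Hessian `H` (as a continuous linear map), `ℓ` is differentiable
near `θ₀`, `θ : ℝ → E` is differentiable at `0` with `θ 0 = θ₀`,
`ε ↦ ∇ℓ(θ ε)` is continuous at `0`, and the stationarity condition
`∇L(θ ε) + ε • ∇ℓ(θ ε) = 0` holds for `ε` near `0`. Then
`θ′(0) = −H⁻¹(∇ℓ(θ₀))`. -/
theorem stmt_6 {E : Type*} [NormedAddCommGroup E] [InnerProductSpace ℝ E]
    [FiniteDimensional ℝ E] (θ₀ : E) (L ℓ : E → ℝ)
    (hL : ∀ᶠ x in nhds θ₀, DifferentiableAt ℝ L x)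
    (hL' : DifferentiableAt ℝ (gradient L) θ₀)
    (H : E ≃L[ℝ] E) (hH : (H : E →L[ℝ] E) = fderiv ℝ (gradient L) θ₀)
    (hℓ : ∀ᶠ x in nhds θ₀, DifferentiableAt ℝ ℓ x)
    (θ : ℝ → E) (hθ : DifferentiableAt ℝ θ 0) (hθ0 : θ 0 = θ₀)
    (hcont : ContinuousAt (fun ε : ℝ => gradient ℓ (θ ε)) 0)
    (hstat : ∀ᶠ ε in nhds (0 : ℝ), gradient L (θ ε) + ε • gradient ℓ (θ ε) = 0) :
    deriv θ 0 = -(H.symm (gradient ℓ θ₀)) :=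
  stmt_6_general θ₀ L ℓ hL' H hH θ hθ hθ0 hcont hstat
end

section
/- Let E be a finite-dimensional real inner product space and θ₀ ∈ E. Let L : E → ℝ be differentiable on a neighborhood of θ₀ with gradient map ∇L differentiable at θ₀, with Hessian H at θ₀ invertible as a continuous linear map on E. Let ℓ : E → ℝ be differentiable on a neighborhood of θ₀, and let θ : ℝ → E be differentiable at 0 with θ(0) = θ₀, with ε ↦ ∇ℓ(θ(ε)) continuous at 0 and ∇L(θ(ε)) + ε · ∇ℓ(θ(ε)) = 0 for all ε near 0. Let K : E → ℝ be differentiable at θ₀ and set g_KL = −∇K(θ₀). Then the derivative at ε = 0 of the composite ε ↦ K(θ(ε)) equals ⟪∇ℓ(θ₀), H⁻¹ g_KL⟫. -/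
/-!
Differentiating the stationarity condition `∇L(θ ε) + ε • ∇ℓ(θ ε) = 0` at `ε = 0` gives
`H θ'(0) = -∇ℓ(θ₀)`, so `θ'(0) = -H⁻¹ ∇ℓ(θ₀)`, and by the chain rule the derivative of
`K ∘ θ` at `0` is `⟪∇K(θ₀), θ'(0)⟫`. The Hessian `H` is self-adjoint by the symmetry of second
derivatives, hence so is `H⁻¹`, which moves it onto `-∇K(θ₀)`.
-/

open RealInnerProductSpace Topology

theorem hasDerivAt_id_smul_of_continuousAt {𝕜 E : Type*} [NontriviallyNormedField 𝕜]
    [NormedAddCommGroup E] [NormedSpace 𝕜 E] {g : 𝕜 → E} (hg : ContinuousAt g 0) :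
    HasDerivAt (fun t => t • g t) (g 0) 0 := by
  rw [hasDerivAt_iff_tendsto_slope]
  refine hg.tendsto.mono_left nhdsWithin_le_nhds |>.congr' ?_
  filter_upwards [self_mem_nhdsWithin] with t (ht : t ≠ 0)
  simp [slope_def_module, smul_smul, inv_mul_cancel₀ ht]

theorem hasDerivAt_of_eventually_add_smul_eq_zero {𝕜 E F : Type*} [NontriviallyNormedField 𝕜]
    [NormedAddCommGroup E] [NormedSpace 𝕜 E] [NormedAddCommGroup F] [NormedSpace 𝕜 F]
    {G : E → F} {A : E ≃L[𝕜] F} {θ : 𝕜 → E} {g : 𝕜 → F}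
    (hG : HasFDerivAt G (A : E →L[𝕜] F) (θ 0)) (hθ : DifferentiableAt 𝕜 θ 0)
    (hg : ContinuousAt g 0) (hroot : ∀ᶠ t in 𝓝 0, G (θ t) + t • g t = 0) :
    HasDerivAt θ (-A.symm (g 0)) 0 := by
  have hchain : HasDerivAt (fun t => G (θ t)) (A (deriv θ 0)) 0 :=
    hG.comp_hasDerivAt 0 hθ.hasDerivAt
  have hroot' : HasDerivAt (fun t => G (θ t)) (-g 0) 0 := by
    refine (hasDerivAt_id_smul_of_continuousAt hg).neg.congr_of_eventuallyEq ?_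
    filter_upwards [hroot] with t ht
    exact eq_neg_of_add_eq_zero_left ht
  have hA : A (deriv θ 0) = -g 0 := hchain.unique hroot'
  rw [← map_neg, ← hA, A.symm_apply_apply]
  exact hθ.hasDerivAt

theorem isSymmetric_of_hasFDerivAt_gradient {E : Type*} [NormedAddCommGroup E]
    [InnerProductSpace ℝ E] [CompleteSpace E] {f : E → ℝ} {x : E} {H : E →L[ℝ] E}
    (hf : ∀ᶠ y in 𝓝 x, DifferentiableAt ℝ f y) (hH : HasFDerivAt (gradient f) H x) :
    (H : E →ₗ[ℝ] E).IsSymmetric := by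
  let D := (InnerProductSpace.toDual ℝ E).toContinuousLinearEquiv.toContinuousLinearMap
  have hfderiv : ∀ᶠ y in 𝓝 x, HasFDerivAt f (D (gradient f y)) y := by
    filter_upwards [hf] with y hy
    simpa [D, toDual_gradient] using hy.hasFDerivAt
  intro v w
  have := second_derivative_symmetric_of_eventually hfderiv (D.hasFDerivAt.comp x hH) v w
  simpa [D, real_inner_comm] using this

theorem HasGradientAt.comp_hasDerivAt {E : Type*} [NormedAddCommGroup E]
    [InnerProductSpace ℝ E] [CompleteSpace E] {f : E → ℝ} {f' : E} {γ : ℝ → E} {γ' : E} {t : ℝ}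
    (hf : HasGradientAt f f' (γ t)) (hγ : HasDerivAt γ γ' t) :
    HasDerivAt (fun s => f (γ s)) ⟪f', γ'⟫ t :=
  (hasGradientAt_iff_hasFDerivAt.mp hf).comp_hasDerivAt t hγ

theorem stmt_7_general {E : Type*} [NormedAddCommGroup E] [InnerProductSpace ℝ E]
    [FiniteDimensional ℝ E] (θ₀ : E) (L ℓ : E → ℝ)
    (hL : ∀ᶠ x in nhds θ₀, DifferentiableAt ℝ L x)
    (hL' : DifferentiableAt ℝ (gradient L) θ₀)
    (H : E ≃L[ℝ] E) (hH : (H : E →L[ℝ] E) = fderiv ℝ (gradient L) θ₀)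
    (θ : ℝ → E) (hθ : DifferentiableAt ℝ θ 0) (hθ0 : θ 0 = θ₀)
    (hcont : ContinuousAt (fun ε : ℝ => gradient ℓ (θ ε)) 0)
    (hstat : ∀ᶠ ε in nhds (0 : ℝ), gradient L (θ ε) + ε • gradient ℓ (θ ε) = 0)
    (K : E → ℝ) (hK : DifferentiableAt ℝ K θ₀) :
    deriv (fun ε => K (θ ε)) 0 =
      ⟪gradient ℓ θ₀, H.symm (-(gradient K θ₀))⟫ := by
  subst hθ0
  have hhess : HasFDerivAt (gradient L) (H : E →L[ℝ] E) (θ 0) := hH ▸ hL'.hasFDerivAt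
  have hθ' : HasDerivAt θ (-H.symm (gradient ℓ (θ 0))) 0 :=
    hasDerivAt_of_eventually_add_smul_eq_zero hhess hθ hcont hstat
  have hsymm : (H.toLinearEquiv.symm : E →ₗ[ℝ] E).IsSymmetric :=
    (isSymmetric_of_hasFDerivAt_gradient hL hhess).toLinearMap_symm
  rw [(hK.hasGradientAt.comp_hasDerivAt hθ').deriv, map_neg, inner_neg_right, inner_neg_right,
    neg_inj, real_inner_comm]
  simpa using hsymm (gradient ℓ (θ 0)) (gradient K (θ 0))

/-- The influence score estimates the target-preference gain.
Under the setup of Statement 6, if moreover `K : E → ℝ` is differentiable at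
`θ₀` and `g_KL = −∇K(θ₀)`, then
`(d/dε) K(θ ε) |_{ε=0} = ⟪∇ℓ(θ₀), H⁻¹ g_KL⟫`. -/
theorem stmt_7 {E : Type*} [NormedAddCommGroup E] [InnerProductSpace ℝ E]
    [FiniteDimensional ℝ E] (θ₀ : E) (L ℓ : E → ℝ)
    (hL : ∀ᶠ x in nhds θ₀, DifferentiableAt ℝ L x)
    (hL' : DifferentiableAt ℝ (gradient L) θ₀)
    (H : E ≃L[ℝ] E) (hH : (H : E →L[ℝ] E) = fderiv ℝ (gradient L) θ₀)
    (hℓ : ∀ᶠ x in nhds θ₀, DifferentiableAt ℝ ℓ x)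
    (θ : ℝ → E) (hθ : DifferentiableAt ℝ θ 0) (hθ0 : θ 0 = θ₀)
    (hcont : ContinuousAt (fun ε : ℝ => gradient ℓ (θ ε)) 0)
    (hstat : ∀ᶠ ε in nhds (0 : ℝ), gradient L (θ ε) + ε • gradient ℓ (θ ε) = 0)
    (K : E → ℝ) (hK : DifferentiableAt ℝ K θ₀) :
    deriv (fun ε => K (θ ε)) 0 =
      ⟪gradient ℓ θ₀, H.symm (-(gradient K θ₀))⟫ :=
  stmt_7_general θ₀ L ℓ hL hL' H hH θ hθ hθ0 hcont hstat K hK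
end

section
/- Let E be a finite-dimensional real inner product space and θ₀ ∈ E. Let L : E → ℝ be differentiable on a neighborhood of θ₀ with gradient map ∇L differentiable at θ₀, with Hessian H at θ₀ invertible as a continuous linear map on E. Let S be a nonempty finite index set of size m and for each z ∈ S let ℓ_z : E → ℝ be differentiable on a neighborhood of θ₀. Let θ : ℝ → E be differentiable at 0 with θ(0) = θ₀, with ε ↦ (1/m)∑_{z∈S} ∇ℓ_z(θ(ε)) continuous at 0 and ∇L(θ(ε)) + (ε/m) · ∑_{z∈S} ∇ℓ_z(θ(ε)) = 0 for all ε near 0. Let K : E → ℝ be differentiable at θ₀ and set g_KL = −∇K(θ₀). Then the derivative at ε = 0 of ε ↦ K(θ(ε)) equals (1/m) · ∑_{z∈S} ⟪∇ℓ_z(θ₀), H⁻¹ g_KL⟫. -/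
open RealInnerProductSpace

/-- Subset form of the influence-score/reward-gain identity.
`S` is a nonempty finite index set of size `m`, each candidate loss `ℓ z`
(`z ∈ S`) is differentiable near `θ₀`, `θ ε` is the local optimum of the
objective upweighted by `(ε/m) ∑_{z∈S} ℓ z`, and `K` is differentiable at `θ₀`
with `g_KL = −∇K(θ₀)`. Then
`(d/dε) K(θ ε) |_{ε=0} = (1/m) ∑_{z∈S} ⟪∇ℓ_z(θ₀), H⁻¹ g_KL⟫`. -/
theorem stmt_8 {E : Type*} [NormedAddCommGroup E] [InnerProductSpace ℝ E]
    [FiniteDimensional ℝ E] (θ₀ : E) (L : E → ℝ)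
    (hL : ∀ᶠ x in nhds θ₀, DifferentiableAt ℝ L x)
    (hL' : DifferentiableAt ℝ (gradient L) θ₀)
    (H : E ≃L[ℝ] E) (hH : (H : E →L[ℝ] E) = fderiv ℝ (gradient L) θ₀)
    {ι : Type*} (S : Finset ι) (hS : S.Nonempty) (m : ℕ) (hm : S.card = m)
    (ℓ : ι → E → ℝ)
    (hℓ : ∀ z ∈ S, ∀ᶠ x in nhds θ₀, DifferentiableAt ℝ (ℓ z) x)
    (θ : ℝ → E) (hθ : DifferentiableAt ℝ θ 0) (hθ0 : θ 0 = θ₀)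
    (hcont : ContinuousAt
      (fun ε : ℝ => ((m : ℝ))⁻¹ • ∑ z ∈ S, gradient (ℓ z) (θ ε)) 0)
    (hstat : ∀ᶠ ε in nhds (0 : ℝ),
      gradient L (θ ε) + (ε / (m : ℝ)) • ∑ z ∈ S, gradient (ℓ z) (θ ε) = 0)
    (K : E → ℝ) (hK : DifferentiableAt ℝ K θ₀) :
    deriv (fun ε => K (θ ε)) 0 =
      (1 / (m : ℝ)) * ∑ z ∈ S, ⟪gradient (ℓ z) θ₀, H.symm (-(gradient K θ₀))⟫ := by
  classical
  have hmpos : 0 < m := hm ▸ Finset.card_pos.mpr hS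
  have hm0 : (m : ℝ) ≠ 0 := Nat.cast_ne_zero.mpr hmpos.ne'
  set G : ℝ → E := fun ε => (m : ℝ)⁻¹ • ∑ z ∈ S, gradient (ℓ z) (θ ε) with hGdef
  set g : E := (m : ℝ)⁻¹ • ∑ z ∈ S, gradient (ℓ z) θ₀ with hgdef
  have hG0 : G 0 = g := by simp [hGdef, hgdef, hθ0]
  -- derivative of θ at 0
  have hθd : HasDerivAt θ (deriv θ 0) 0 := hθ.hasDerivAt
  -- first expression for derivative of gradient L ∘ θ
  have hgradL : HasFDerivAt (gradient L) (H : E →L[ℝ] E) (θ 0) := by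
    rw [hθ0, hH]; exact hL'.hasFDerivAt
  have hφ1 : HasDerivAt (fun ε => gradient L (θ ε)) ((H : E →L[ℝ] E) (deriv θ 0)) 0 :=
    hgradL.comp_hasDerivAt 0 hθd
  -- second expression via stationarity
  have heq : (fun ε => gradient L (θ ε)) =ᶠ[nhds (0 : ℝ)] fun ε => (-ε) • G ε := by
    filter_upwards [hstat] with ε hε
    have h1 : gradient L (θ ε) = -((ε / (m : ℝ)) • ∑ z ∈ S, gradient (ℓ z) (θ ε)) :=
      eq_neg_of_add_eq_zero_left hε
    rw [h1]
    simp only [hGdef, smul_smul, neg_smul, div_eq_mul_inv, neg_mul]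
  have hψ : HasDerivAt (fun ε : ℝ => (-ε) • G ε) (-g) 0 := by
    rw [hasDerivAt_iff_tendsto_slope]
    have htend : Filter.Tendsto (fun ε => -G ε) (nhdsWithin (0 : ℝ) {(0 : ℝ)}ᶜ)
        (nhds (-g)) := by
      have h2 : Filter.Tendsto G (nhds 0) (nhds g) := hG0 ▸ hcont
      exact (h2.neg).mono_left nhdsWithin_le_nhds
    refine htend.congr' ?_
    filter_upwards [self_mem_nhdsWithin] with ε hε
    have hε0 : (ε : ℝ) ≠ 0 := hε
    rw [slope_def_module]
    simp only [neg_zero, zero_smul, sub_zero, smul_smul]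
    rw [show ε⁻¹ * -ε = -1 by field_simp]
    simp
  have hφ2 : HasDerivAt (fun ε => gradient L (θ ε)) (-g) 0 :=
    hψ.congr_of_eventuallyEq heq
  -- identify θ'(0)
  have hH1 : (H : E →L[ℝ] E) (deriv θ 0) = -g := hφ1.unique hφ2
  have hθ' : deriv θ 0 = H.symm (-g) := by
    have := congrArg H.symm hH1
    simpa using this
  -- inner product formula for fderiv of K
  have hfK : ∀ v : E, fderiv ℝ K θ₀ v = ⟪gradient K θ₀, v⟫ := by
    intro v
    rw [← InnerProductSpace.toDual_apply_apply, gradient,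
      LinearIsometryEquiv.apply_symm_apply]
  -- derivative of K ∘ θ
  have hKθ : HasDerivAt (fun ε => K (θ ε)) (⟪gradient K θ₀, deriv θ 0⟫) 0 := by
    have h1 : HasFDerivAt K (fderiv ℝ K θ₀) (θ 0) := hθ0 ▸ hK.hasFDerivAt
    have := h1.comp_hasDerivAt 0 hθd
    rwa [hfK] at this
  -- symmetry of the Hessian
  have hsymm : ∀ v w : E, ⟪(H : E →L[ℝ] E) v, w⟫ = ⟪(H : E →L[ℝ] E) w, v⟫ := by
    set T : E →L[ℝ] E →L[ℝ] ℝ := innerSL ℝ with hT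
    have hf : ∀ᶠ y in nhds θ₀, HasFDerivAt L ((fun y => T (gradient L y)) y) y := by
      filter_upwards [hL] with y hy
      have h2 : T (gradient L y) = fderiv ℝ L y := by
        ext w
        have : fderiv ℝ L y = InnerProductSpace.toDual ℝ E (gradient L y) := by
          rw [gradient, LinearIsometryEquiv.apply_symm_apply]
        rw [this]
        rfl
      rw [h2]
      exact hy.hasFDerivAt
    have hgradL' : HasFDerivAt (gradient L) (H : E →L[ℝ] E) θ₀ := by
      rw [hH]; exact hL'.hasFDerivAt
    have hT' : HasFDerivAt (fun y => T (gradient L y)) (T.comp (H : E →L[ℝ] E)) θ₀ :=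
      T.hasFDerivAt.comp θ₀ hgradL'
    intro v w
    exact second_derivative_symmetric_of_eventually hf hT' v w
  have hsymm' : ∀ a b : E, ⟪a, H.symm b⟫ = ⟪H.symm a, b⟫ := by
    intro a b
    have h1 : a = (H : E →L[ℝ] E) (H.symm a) := by simp
    have h2 : b = (H : E →L[ℝ] E) (H.symm b) := by simp
    calc ⟪a, H.symm b⟫ = ⟪(H : E →L[ℝ] E) (H.symm a), H.symm b⟫ := by rw [← h1]
      _ = ⟪(H : E →L[ℝ] E) (H.symm b), H.symm a⟫ := hsymm _ _
      _ = ⟪b, H.symm a⟫ := by rw [← h2]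
      _ = ⟪H.symm a, b⟫ := real_inner_comm _ _
  -- conclude
  rw [hKθ.deriv, hθ']
  have hRHS : (1 / (m : ℝ)) * ∑ z ∈ S, ⟪gradient (ℓ z) θ₀, H.symm (-(gradient K θ₀))⟫
      = ⟪g, H.symm (-(gradient K θ₀))⟫ := by
    rw [hgdef, real_inner_smul_left, ← sum_inner, one_div]
  rw [hRHS]
  have hHneg : (H.symm (-g) : E) = -(H.symm g) := by simp
  have hHneg' : (H.symm (-(gradient K θ₀)) : E) = -(H.symm (gradient K θ₀)) := by simp
  rw [hHneg, hHneg', inner_neg_right, inner_neg_right, hsymm' (gradient K θ₀) g,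
    real_inner_comm]
end

section
/- Let E be a finite-dimensional real inner product space, θ₀ ∈ E, and let L : E → ℝ be differentiable on a neighborhood of θ₀ with gradient map ∇L differentiable at θ₀ and Hessian H at θ₀ invertible as a continuous linear map on E. Let D be a finite set and for each z ∈ D let ℓ_z : E → ℝ be differentiable on a neighborhood of θ₀. Let K : E → ℝ be differentiable at θ₀, set g_KL = −∇K(θ₀) and h_π(z) = ⟪∇ℓ_z(θ₀), H⁻¹ g_KL⟫. Let m ≤ |D|, let S_π ⊆ D be a size-m subset with h_π(y) ≤ h_π(x) for all x ∈ S_π and y ∈ D \ S_π, and let S₀ ⊆ D be any size-m subset. Suppose θ_{S_π}, θ_{S₀} : ℝ → E are differentiable at 0 with value θ₀ at 0, with ε ↦ (1/m)∑_{z∈S} ∇ℓ_z(θ_S(ε)) continuous at 0 and ∇L(θ_S(ε)) + (ε/m)∑_{z∈S} ∇ℓ_z(θ_S(ε)) = 0 for all ε near 0, for S ∈ {S_π, S₀}. Then the derivative at 0 of ε ↦ K(θ_{S_π}(ε)) − K(θ_{S₀}(ε)) equals Δ_m := (1/m)(∑_{z∈S_π} h_π(z) − ∑_{z∈S₀} h_π(z)),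 and Δ_m ≥ 0. -/
/-!
Differentiating the stationarity condition `∇L(θ_S ε) + ε • G_S ε = 0` at `ε = 0` gives
`H θ_S'(0) = -G_S(0)`, so `θ_S'(0) = -H⁻¹ G_S(0)` with `G_S(0) = (1/m) ∑_{z ∈ S} ∇ℓ_z(θ₀)`.
By the chain rule, and because `H⁻¹` is self-adjoint (the Hessian is symmetric), the reward gain
`(K ∘ θ_S)'(0) = ⟪∇K(θ₀), -H⁻¹ G_S(0)⟫` is the average of the PRISM scores over `S`. The gap is
nonnegative by an exchange argument: every element of `S₀ \ S_π` scores at most the minimum score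
on `S_π \ S₀`, and the two differences have the same size.
-/

open RealInnerProductSpace Filter Topology Finset

section TopSelection

variable {ι β : Type*} [AddCommMonoid β] [LinearOrder β] [IsOrderedAddMonoid β]

theorem Finset.sum_le_sum_of_card_eq_of_forall_le {A B : Finset ι} (f : ι → β)
    (hcard : #A = #B) (hle : ∀ a ∈ A, ∀ b ∈ B, f a ≤ f b) :
    ∑ a ∈ A, f a ≤ ∑ b ∈ B, f b := by
  rcases B.eq_empty_or_nonempty with rfl | hB
  · simp [card_eq_zero.mp hcard]
  obtain ⟨b₀, hb₀, hmin⟩ := B.exists_min_image f hB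
  calc ∑ a ∈ A, f a ≤ #A • f b₀ := A.sum_le_card_nsmul f _ fun a ha => hle a ha b₀ hb₀
    _ = #B • f b₀ := by rw [hcard]
    _ ≤ ∑ b ∈ B, f b := B.card_nsmul_le_sum f _ hmin

theorem Finset.sum_le_sum_of_card_eq_of_top_subset [DecidableEq ι] {D S T : Finset ι} (f : ι → β)
    (hTD : T ⊆ D) (hcard : #T = #S) (htop : ∀ x ∈ S, ∀ y ∈ D \ S, f y ≤ f x) :
    ∑ z ∈ T, f z ≤ ∑ z ∈ S, f z := by
  rw [← sum_inter_add_sum_sdiff T S f, ← sum_inter_add_sum_sdiff S T f, inter_comm S T]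
  refine add_le_add_right (sum_le_sum_of_card_eq_of_forall_le f (card_sdiff_comm hcard) ?_) _
  intro y hy x hx
  rw [mem_sdiff] at hx hy
  exact htop x hx.1 y (mem_sdiff.mpr ⟨hTD hy.1, hy.2⟩)

end TopSelection

section ImplicitDerivative

variable {𝕜 F : Type*} [NontriviallyNormedField 𝕜] [NormedAddCommGroup F] [NormedSpace 𝕜 F]

theorem ContinuousAt.hasDerivAt_smul_self {G : 𝕜 → F} (hG : ContinuousAt G 0) :
    HasDerivAt (fun ε => ε • G ε) (G 0) 0 := by
  rw [hasDerivAt_iff_tendsto_slope]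
  refine (hG.tendsto.mono_left nhdsWithin_le_nhds).congr' ?_
  filter_upwards [self_mem_nhdsWithin] with ε (hε : ε ≠ 0)
  simp [slope_def_module, smul_smul, inv_mul_cancel₀ hε]

variable {E : Type*} [NormedAddCommGroup E] [NormedSpace 𝕜 E]

theorem HasFDerivAt.hasDerivAt_of_add_smul_eq_zero {Φ : E → F} {x₀ : E} {H : E ≃L[𝕜] F}
    (hΦ : HasFDerivAt Φ (H : E →L[𝕜] F) x₀) {θ : 𝕜 → E} (hθ : DifferentiableAt 𝕜 θ 0)
    (hθ0 : θ 0 = x₀) {G : 𝕜 → F} (hG : ContinuousAt G 0)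
    (hstat : ∀ᶠ ε in 𝓝 0, Φ (θ ε) + ε • G ε = 0) :
    HasDerivAt θ (-H.symm (G 0)) 0 := by
  have hchain : HasDerivAt (fun ε => Φ (θ ε)) (H (deriv θ 0)) 0 :=
    hΦ.comp_hasDerivAt_of_eq 0 hθ.hasDerivAt hθ0.symm
  have hsmul : HasDerivAt (fun ε => Φ (θ ε)) (-G 0) 0 :=
    hG.hasDerivAt_smul_self.neg.congr_of_eventuallyEq
      (hstat.mono fun _ hε => eq_neg_of_add_eq_zero_left hε)
  have hH : H (deriv θ 0) = -G 0 := hchain.unique hsmul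
  rw [← map_neg, ← hH, H.symm_apply_apply]
  exact hθ.hasDerivAt

end ImplicitDerivative

section Influence

variable {E : Type*} [NormedAddCommGroup E] [InnerProductSpace ℝ E]

theorem ContinuousLinearEquiv.inner_symm_apply_comm {H : E ≃L[ℝ] E}
    (hH : ∀ v w, ⟪H v, w⟫ = ⟪v, H w⟫) (a b : E) :
    ⟪H.symm a, b⟫ = ⟪a, H.symm b⟫ := by
  simpa using (hH (H.symm a) (H.symm b)).symm

variable [CompleteSpace E]

theorem inner_fderiv_gradient_comm {L : E → ℝ} {θ₀ : E}
    (hL : ∀ᶠ x in 𝓝 θ₀, DifferentiableAt ℝ L x)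
    (hL' : DifferentiableAt ℝ (gradient L) θ₀) (v w : E) :
    ⟪fderiv ℝ (gradient L) θ₀ v, w⟫ = ⟪v, fderiv ℝ (gradient L) θ₀ w⟫ := by
  have hfderiv : ∀ᶠ y in 𝓝 θ₀, HasFDerivAt L (innerSL ℝ (gradient L y)) y := by
    filter_upwards [hL] with y hy
    convert hy.hasFDerivAt using 1
    ext u
    exact inner_gradient_left
  have hsymm := second_derivative_symmetric_of_eventually hfderiv
    ((innerSL ℝ).hasFDerivAt.comp θ₀ hL'.hasFDerivAt) v w
  rw [← real_inner_comm v]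
  exact hsymm

theorem hasDerivAt_comp_upweighted_optimum {L K : E → ℝ} {θ₀ : E} {H : E ≃L[ℝ] E}
    (hHsymm : ∀ v w, ⟪H v, w⟫ = ⟪v, H w⟫) (hH : HasFDerivAt (gradient L) (H : E →L[ℝ] E) θ₀)
    (hK : DifferentiableAt ℝ K θ₀) {ι : Type*} (S : Finset ι) (ℓ : ι → E → ℝ) (m : ℕ)
    {θ : ℝ → E} (hθ : DifferentiableAt ℝ θ 0) (hθ0 : θ 0 = θ₀)
    (hcont : ContinuousAt (fun ε : ℝ => (m : ℝ)⁻¹ • ∑ z ∈ S, gradient (ℓ z) (θ ε)) 0)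
    (hstat : ∀ᶠ ε in 𝓝 (0 : ℝ),
      gradient L (θ ε) + (ε / (m : ℝ)) • ∑ z ∈ S, gradient (ℓ z) (θ ε) = 0) :
    HasDerivAt (fun ε => K (θ ε))
      ((1 / (m : ℝ)) * ∑ z ∈ S, ⟪gradient (ℓ z) θ₀, H.symm (-gradient K θ₀)⟫) 0 := by
  have hθ' := hH.hasDerivAt_of_add_smul_eq_zero hθ hθ0 hcont
    (hstat.mono fun ε hε => by rwa [div_eq_mul_inv, mul_smul] at hε)
  refine (hK.hasFDerivAt.comp_hasDerivAt_of_eq 0 hθ' hθ0.symm).congr_deriv ?_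
  rw [hθ0, ← inner_gradient_left, ← sum_inner,
    ← H.inner_symm_apply_comm hHsymm (∑ z ∈ S, gradient (ℓ z) θ₀), map_smul, inner_neg_right,
    inner_neg_right, real_inner_smul_right, real_inner_comm (gradient K θ₀)]
  ring

end Influence

theorem stmt_15_general {E : Type*} [NormedAddCommGroup E] [InnerProductSpace ℝ E]
    [FiniteDimensional ℝ E] (θ₀ : E) (L : E → ℝ)
    (hL : ∀ᶠ x in nhds θ₀, DifferentiableAt ℝ L x)
    (hL' : DifferentiableAt ℝ (gradient L) θ₀)
    (H : E ≃L[ℝ] E) (hH : (H : E →L[ℝ] E) = fderiv ℝ (gradient L) θ₀)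
    {α : Type*} [DecidableEq α] (D : Finset α) (ℓ : α → E → ℝ)
    (K : E → ℝ) (hK : DifferentiableAt ℝ K θ₀)
    (hπ : α → ℝ)
    (hπdef : ∀ z, hπ z = ⟪gradient (ℓ z) θ₀, H.symm (-(gradient K θ₀))⟫)
    (m : ℕ)
    (Sπ S₀ : Finset α) (hS₀D : S₀ ⊆ D)
    (hSπcard : Sπ.card = m) (hS₀card : S₀.card = m)
    (htop : ∀ x ∈ Sπ, ∀ y ∈ D \ Sπ, hπ y ≤ hπ x)
    (θπ θz : ℝ → E)
    (hθπ : DifferentiableAt ℝ θπ 0) (hθπ0 : θπ 0 = θ₀)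
    (hθz : DifferentiableAt ℝ θz 0) (hθz0 : θz 0 = θ₀)
    (hcontπ : ContinuousAt
      (fun ε : ℝ => ((m : ℝ))⁻¹ • ∑ z ∈ Sπ, gradient (ℓ z) (θπ ε)) 0)
    (hcontz : ContinuousAt
      (fun ε : ℝ => ((m : ℝ))⁻¹ • ∑ z ∈ S₀, gradient (ℓ z) (θz ε)) 0)
    (hstatπ : ∀ᶠ ε in nhds (0 : ℝ),
      gradient L (θπ ε) + (ε / (m : ℝ)) • ∑ z ∈ Sπ, gradient (ℓ z) (θπ ε) = 0)
    (hstatz : ∀ᶠ ε in nhds (0 : ℝ),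
      gradient L (θz ε) + (ε / (m : ℝ)) • ∑ z ∈ S₀, gradient (ℓ z) (θz ε) = 0) :
    deriv (fun ε => K (θπ ε) - K (θz ε)) 0 =
        (1 / (m : ℝ)) * (∑ z ∈ Sπ, hπ z - ∑ z ∈ S₀, hπ z) ∧
    0 ≤ (1 / (m : ℝ)) * (∑ z ∈ Sπ, hπ z - ∑ z ∈ S₀, hπ z) := by
  have hHsymm : ∀ v w, ⟪H v, w⟫ = ⟪v, H w⟫ := fun v w => by
    simpa only [← hH, ContinuousLinearEquiv.coe_coe] using inner_fderiv_gradient_comm hL hL' v w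
  have hHderiv : HasFDerivAt (gradient L) (H : E →L[ℝ] E) θ₀ := hH ▸ hL'.hasFDerivAt
  have hgainπ := hasDerivAt_comp_upweighted_optimum hHsymm hHderiv hK Sπ ℓ m hθπ hθπ0 hcontπ hstatπ
  have hgainz := hasDerivAt_comp_upweighted_optimum hHsymm hHderiv hK S₀ ℓ m hθz hθz0 hcontz hstatz
  refine ⟨?_, mul_nonneg (by positivity) (sub_nonneg.mpr ?_)⟩
  · simpa only [mul_sub, hπdef] using (hgainπ.fun_sub hgainz).deriv
  · exact sum_le_sum_of_card_eq_of_top_subset _ hS₀D (hS₀card.trans hSπcard.symm) htop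

/-- Selection gap (Theorem 2). With the influence-function
setup of Statement 8 for the two size-`m` subsets `S_π` (a top-`m` set for the
PRISM score `h_π z = ⟪∇ℓ_z(θ₀), H⁻¹ g_KL⟫`) and `S₀` (arbitrary), the
derivative at `0` of `ε ↦ K(θ_{S_π} ε) − K(θ_{S₀} ε)` equals
`Δ_m = (1/m)(∑_{z∈S_π} h_π z − ∑_{z∈S₀} h_π z)`, and `Δ_m ≥ 0`. -/
theorem stmt_15 {E : Type*} [NormedAddCommGroup E] [InnerProductSpace ℝ E]
    [FiniteDimensional ℝ E] (θ₀ : E) (L : E → ℝ)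
    (hL : ∀ᶠ x in nhds θ₀, DifferentiableAt ℝ L x)
    (hL' : DifferentiableAt ℝ (gradient L) θ₀)
    (H : E ≃L[ℝ] E) (hH : (H : E →L[ℝ] E) = fderiv ℝ (gradient L) θ₀)
    {α : Type*} [DecidableEq α] (D : Finset α) (ℓ : α → E → ℝ)
    (hℓ : ∀ z ∈ D, ∀ᶠ x in nhds θ₀, DifferentiableAt ℝ (ℓ z) x)
    (K : E → ℝ) (hK : DifferentiableAt ℝ K θ₀)
    (hπ : α → ℝ)
    (hπdef : ∀ z, hπ z = ⟪gradient (ℓ z) θ₀, H.symm (-(gradient K θ₀))⟫)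
    (m : ℕ) (hm : m ≤ D.card)
    (Sπ S₀ : Finset α) (hSπD : Sπ ⊆ D) (hS₀D : S₀ ⊆ D)
    (hSπcard : Sπ.card = m) (hS₀card : S₀.card = m)
    (htop : ∀ x ∈ Sπ, ∀ y ∈ D \ Sπ, hπ y ≤ hπ x)
    (θπ θz : ℝ → E)
    (hθπ : DifferentiableAt ℝ θπ 0) (hθπ0 : θπ 0 = θ₀)
    (hθz : DifferentiableAt ℝ θz 0) (hθz0 : θz 0 = θ₀)
    (hcontπ : ContinuousAt
      (fun ε : ℝ => ((m : ℝ))⁻¹ • ∑ z ∈ Sπ, gradient (ℓ z) (θπ ε)) 0)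
    (hcontz : ContinuousAt
      (fun ε : ℝ => ((m : ℝ))⁻¹ • ∑ z ∈ S₀, gradient (ℓ z) (θz ε)) 0)
    (hstatπ : ∀ᶠ ε in nhds (0 : ℝ),
      gradient L (θπ ε) + (ε / (m : ℝ)) • ∑ z ∈ Sπ, gradient (ℓ z) (θπ ε) = 0)
    (hstatz : ∀ᶠ ε in nhds (0 : ℝ),
      gradient L (θz ε) + (ε / (m : ℝ)) • ∑ z ∈ S₀, gradient (ℓ z) (θz ε) = 0) :
    deriv (fun ε => K (θπ ε) - K (θz ε)) 0 =
        (1 / (m : ℝ)) * (∑ z ∈ Sπ, hπ z - ∑ z ∈ S₀, hπ z) ∧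
    0 ≤ (1 / (m : ℝ)) * (∑ z ∈ Sπ, hπ z - ∑ z ∈ S₀, hπ z) :=
  stmt_15_general θ₀ L hL hL' H hH D ℓ K hK hπ hπdef m Sπ S₀ hS₀D hSπcard hS₀card htop θπ θz hθπ
    hθπ0 hθz hθz0 hcontπ hcontz hstatπ hstatz
end
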